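/- Let A, B, C, D be points in the Euclidean plane with A ≠ B and C ≠ D, such that ‖A − D‖ = ‖B − C‖ = ‖(A+B)/2 − (D+C)/2‖. Then A − B = D − C. -/

import Mathlib

theorem eq_of_norm_eq_of_norm_midpoint_eq {E : Type*} [NormedAddCommGroup E] [NormedSpace ℝ E]
    [StrictConvexSpace ℝ E] {x y : E} (hxy : ‖x‖ = ‖y‖)
    (hmid : ‖(1 / 2 : ℝ) • (x + y)‖ = ‖x‖) : x = y :=
  not_not.mp fun hne => ((norm_midpoint_lt_iff hxy).mpr hne).ne hmid

theorem parallelogram_of_dist_eq_midpoint_dist_general (A B C D : ℂ)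
    (h1 : ‖A - D‖ = ‖B - C‖)
    (h2 : ‖B - C‖ = ‖(A + B) / 2 - (D + C) / 2‖) :
    A - B = D - C := by
  have hmid : (A + B) / 2 - (D + C) / 2 = (1 / 2 : ℝ) • ((A - D) + (B - C)) := by
    rw [Complex.real_smul]
    push_cast
    ring
  have hsides : A - D = B - C :=
    eq_of_norm_eq_of_norm_midpoint_eq h1 (by rw [← hmid, ← h2, h1])
  linear_combination hsides

/-- If `A ≠ B`, `C ≠ D` and `‖A − D‖ = ‖B − C‖ = ‖(A+B)/2 − (D+C)/2‖`,
then `A − B = D − C` (the quadrilateral is a parallelogram). -/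
theorem parallelogram_of_dist_eq_midpoint_dist (A B C D : ℂ)
    (hAB : A ≠ B) (hCD : C ≠ D)
    (h1 : ‖A - D‖ = ‖B - C‖)
    (h2 : ‖B - C‖ = ‖(A + B) / 2 - (D + C) / 2‖) :
    A - B = D - C :=
  parallelogram_of_dist_eq_midpoint_dist_general A B C D h1 h2
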